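/- arXiv:math/0612265 — 5 statements merged into one kernel-verified Lean document; each statement's English description precedes it below -/
import Mathlib

section
/- Let (M, d) be a metric space, let a ≤ b, and let p : [a, b] → M be a continuous curve of finite length λ. Then there exist a nondecreasing surjective function φ : [a, b] → [0, λ] with φ(a) = 0 and φ(b) = λ, and a map q : [0, λ] → M which is 1-Lipschitz (of order 1), such that p(t) = q(φ(t)) for every t ∈ [a, b]. -/
open Set

/-- Right continuity of the variation: for a continuous curve of finite variation,
the variation on `[x, t]` is small for `t` close to `x` from the right. -/
lemma evar_right_small {M : Type*} [MetricSpace M] {a b : ℝ} {p : ℝ → M}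
    (hp : ContinuousOn p (Icc a b)) (hfin : eVariationOn p (Icc a b) ≠ ⊤)
    {x : ℝ} (hx : x ∈ Ico a b) {ε : ℝ} (hε : 0 < ε) :
    ∃ t ∈ Ioc x b, eVariationOn p (Icc a b ∩ Icc x t) ≤ ENNReal.ofReal ε := by
  have hxs : x ∈ Icc a b := ⟨hx.1, hx.2.le⟩
  set V := eVariationOn p (Icc a b ∩ Icc x b) with hV
  have hVfin : V ≠ ⊤ := ne_top_of_le_ne_top hfin (eVariationOn.mono p inter_subset_left)
  by_cases hcase : V ≤ ENNReal.ofReal ε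
  · exact ⟨b, ⟨hx.2, le_rfl⟩, hcase⟩
  push_neg at hcase
  -- continuity of p at x within Icc a b
  obtain ⟨δ, hδ, hδ'⟩ := Metric.continuousWithinAt_iff.mp (hp x hxs) (ε / 2) (half_pos hε)
  -- a near-optimal partition
  have h1 : V - ENNReal.ofReal (ε / 2) < V := by
    refine ENNReal.sub_lt_self hVfin ?_ ?_
    · exact fun h0 => by simp [h0] at hcase
    · simp [ENNReal.ofReal_eq_zero, not_le, half_pos hε]
  rw [hV] at h1
  conv at h1 => rw [eVariationOn]
  obtain ⟨⟨n, u, hu, us⟩, hsum⟩ := lt_iSup_iff.mp h1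
  by_cases hex : ∃ k, k ≤ n ∧ x < u k
  case neg =>
    exfalso
    push_neg at hex
    have hux : ∀ i ≤ n, u i = x := fun i hi => le_antisymm (hex i hi) (us i).2.1
    have : (∑ i ∈ Finset.range n, edist (p (u (i + 1))) (p (u i))) = 0 := by
      refine Finset.sum_eq_zero fun i hi => ?_
      rw [Finset.mem_range] at hi
      rw [hux (i + 1) hi, hux i hi.le, edist_self]
    rw [this] at hsum
    exact absurd hsum (not_lt.mpr zero_le)
  case pos =>
  set N := Nat.find hex with hN
  have hNspec : N ≤ n ∧ x < u N := Nat.find_spec hex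
  have hux : ∀ i < N, u i = x := by
    intro i hi
    have := Nat.find_min hex hi
    push_neg at this
    exact le_antisymm (this (hi.le.trans hNspec.1)) (us i).2.1
  -- choose `t` close to `x`, below `u N`
  set t := min (u N) (x + δ / 2) with ht
  have hxt : x < t := lt_min hNspec.2 (by linarith)
  have htuN : t ≤ u N := min_le_left _ _
  have htb : t ≤ b := htuN.trans (us N).1.2
  have hts : t ∈ Icc a b := ⟨hx.1.trans hxt.le, htb⟩
  have hdxt : dist t x < δ := by
    rw [Real.dist_eq, abs_of_pos (by linarith)]
    have : t ≤ x + δ / 2 := min_le_right _ _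
    linarith
  have hpxt : dist (p t) (p x) < ε / 2 := hδ' hts hdxt
  set D := edist (p x) (p t) with hD
  have hDle : D ≤ ENNReal.ofReal (ε / 2) := by
    rw [hD, edist_dist, dist_comm]
    exact ENNReal.ofReal_le_ofReal hpxt.le
  -- the modified partition
  set v : ℕ → ℝ := fun i => max (u i) t with hv
  have hvmono : Monotone v := fun i j hij => max_le_max (hu hij) le_rfl
  have hvmem : ∀ i, v i ∈ Icc a b ∩ Icc t b :=
    fun i => ⟨⟨hts.1.trans (le_max_right _ _), max_le (us i).1.2 htb⟩,
      le_max_right _ _, max_le (us i).1.2 htb⟩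
  have hterm : ∀ i ∈ Finset.range n,
      edist (p (u (i + 1))) (p (u i)) ≤
        edist (p (v (i + 1))) (p (v i)) + (if i + 1 = N then D else 0) := by
    intro i _
    rcases lt_trichotomy (i + 1) N with hlt | heq | hgt
    · rw [hux (i + 1) hlt, hux i (Nat.lt_of_succ_lt hlt), edist_self]
      exact zero_le
    · have hui : u i = x := hux i (heq ▸ i.lt_succ_self)
      have hvi : v i = t := by rw [hv]; simp [hui, max_eq_right hxt.le]
      have hvi1 : v (i + 1) = u (i + 1) := max_eq_left (heq ▸ htuN)
      rw [if_pos heq, hui, hvi, hvi1]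
      calc edist (p (u (i + 1))) (p x)
          ≤ edist (p (u (i + 1))) (p t) + edist (p t) (p x) := edist_triangle _ _ _
        _ = edist (p (u (i + 1))) (p t) + D := by rw [hD, edist_comm (p t) (p x)]
    · have hNi : N ≤ i := Nat.lt_succ_iff.mp hgt
      have h1 : v i = u i := max_eq_left (htuN.trans (hu hNi))
      have h2 : v (i + 1) = u (i + 1) := max_eq_left (htuN.trans (hu (hNi.trans i.le_succ)))
      rw [h1, h2, if_neg hgt.ne']
      simp
  have hindic : (∑ i ∈ Finset.range n, (if i + 1 = N then D else 0)) ≤ D := by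
    calc (∑ i ∈ Finset.range n, (if i + 1 = N then D else 0))
        ≤ ∑ i ∈ Finset.range n, (if i = N - 1 then (fun _ => D) i else 0) := by
          refine Finset.sum_le_sum fun i _ => ?_
          split_ifs with h1 h2 h2
          · exact le_rfl
          · exact absurd (by omega : i = N - 1) h2
          · exact zero_le
          · exact le_rfl
      _ ≤ D := by rw [Finset.sum_ite_eq']; split_ifs <;> simp
  have hsum2 : (∑ i ∈ Finset.range n, edist (p (u (i + 1))) (p (u i))) ≤
      eVariationOn p (Icc a b ∩ Icc t b) + D := by
    calc (∑ i ∈ Finset.range n, edist (p (u (i + 1))) (p (u i)))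
        ≤ ∑ i ∈ Finset.range n,
            (edist (p (v (i + 1))) (p (v i)) + (if i + 1 = N then D else 0)) :=
          Finset.sum_le_sum hterm
      _ = (∑ i ∈ Finset.range n, edist (p (v (i + 1))) (p (v i))) +
            ∑ i ∈ Finset.range n, (if i + 1 = N then D else 0) := Finset.sum_add_distrib
      _ ≤ eVariationOn p (Icc a b ∩ Icc t b) + D :=
          add_le_add (eVariationOn.sum_le (f := p) (n := n) hvmono hvmem) hindic
  -- conclude
  have hW : eVariationOn p (Icc a b ∩ Icc t b) ≠ ⊤ :=
    ne_top_of_le_ne_top hfin (eVariationOn.mono p inter_subset_left)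
  have hVle : V ≤ eVariationOn p (Icc a b ∩ Icc t b) + ENNReal.ofReal ε := by
    have h2 : V - ENNReal.ofReal (ε / 2) ≤
        eVariationOn p (Icc a b ∩ Icc t b) + ENNReal.ofReal (ε / 2) :=
      le_trans hsum.le (hsum2.trans (add_le_add_right hDle _))
    have := tsub_le_iff_right.mp h2
    calc V ≤ eVariationOn p (Icc a b ∩ Icc t b) + ENNReal.ofReal (ε / 2)
            + ENNReal.ofReal (ε / 2) := this
      _ = eVariationOn p (Icc a b ∩ Icc t b) + ENNReal.ofReal ε := by
          rw [add_assoc, ← ENNReal.ofReal_add (by linarith) (by linarith)]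
          norm_num
  have hadd : eVariationOn p (Icc a b ∩ Icc x t) + eVariationOn p (Icc a b ∩ Icc t b) = V :=
    eVariationOn.Icc_add_Icc p hxt.le htb hts
  refine ⟨t, ⟨hxt, htb⟩, ?_⟩
  rw [← ENNReal.add_le_add_iff_right hW]
  rw [hadd]
  rw [add_comm] at hVle
  exact hVle.trans (by rw [add_comm])

/-- Left continuity of the variation. -/
lemma evar_left_small {M : Type*} [MetricSpace M] {a b : ℝ} {p : ℝ → M}
    (hp : ContinuousOn p (Icc a b)) (hfin : eVariationOn p (Icc a b) ≠ ⊤)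
    {x : ℝ} (hx : x ∈ Ioc a b) {ε : ℝ} (hε : 0 < ε) :
    ∃ t ∈ Ico a x, eVariationOn p (Icc a b ∩ Icc t x) ≤ ENNReal.ofReal ε := by
  have hanti : ∀ s : Set ℝ, AntitoneOn (Neg.neg : ℝ → ℝ) s := fun s u _ v _ h => neg_le_neg h
  have himg : ∀ c d : ℝ, (Neg.neg : ℝ → ℝ) '' Icc c d = Icc (-d) (-c) := fun c d => by
    ext y; simp [le_neg, neg_le, and_comm]
  have hcomp : ∀ s : Set ℝ, eVariationOn (p ∘ Neg.neg) s = eVariationOn p (Neg.neg '' s) :=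
    fun s => eVariationOn.comp_eq_of_antitoneOn p Neg.neg (hanti s)
  have hIccinter : ∀ c d e f : ℝ,
      (Neg.neg : ℝ → ℝ) '' (Icc c d ∩ Icc e f) = Icc (-d) (-c) ∩ Icc (-f) (-e) := by
    intro c d e f
    rw [Set.image_inter neg_injective, himg, himg]
  have hP : ContinuousOn (p ∘ Neg.neg) (Icc (-b) (-a)) := by
    refine hp.comp (continuous_neg.continuousOn) fun y hy => ?_
    exact ⟨by linarith [hy.2], by linarith [hy.1]⟩
  have hPfin : eVariationOn (p ∘ Neg.neg) (Icc (-b) (-a)) ≠ ⊤ := by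
    rw [hcomp, himg]; simpa using hfin
  have hx' : -x ∈ Ico (-b) (-a) := ⟨by linarith [hx.2], by linarith [hx.1]⟩
  obtain ⟨t', ⟨ht1, ht2⟩, hvar⟩ := evar_right_small hP hPfin hx' hε
  refine ⟨-t', ⟨by linarith, by linarith⟩, ?_⟩
  have h0 : Icc (-b) (-a) ∩ Icc (-x) t' = Icc (-b) (-a) ∩ Icc (-x) (-(-t')) := by ring_nf
  rw [h0, ← hIccinter] at hvar
  rw [hcomp] at hvar
  have h2 : (Neg.neg : ℝ → ℝ) '' ((Neg.neg : ℝ → ℝ) '' (Icc a b ∩ Icc (-t') x))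
      = Icc a b ∩ Icc (-t') x := by
    ext y; simp
  rwa [h2] at hvar

/-- A continuous curve `p : [a, b] → M` of finite length `L` can be reparameterized
by arc length: there are a nondecreasing function `φ : [a, b] → [0, L]` which is
surjective onto `[0, L]`, with `φ a = 0` and `φ b = L`, and a map `q` which is
`1`-Lipschitz on `[0, L]`, such that `p t = q (φ t)` for every `t ∈ [a, b]`. -/
theorem exists_arclength_reparam {M : Type*} [MetricSpace M] (a b : ℝ) (hab : a ≤ b)
    (p : ℝ → M) (hp : ContinuousOn p (Icc a b)) (L : ℝ) (hL : 0 ≤ L)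
    (hlen : eVariationOn p (Icc a b) = ENNReal.ofReal L) :
    ∃ φ : ℝ → ℝ, ∃ q : ℝ → M,
      MonotoneOn φ (Icc a b) ∧
      φ '' Icc a b = Icc 0 L ∧
      φ a = 0 ∧ φ b = L ∧
      (∀ u ∈ Icc (0 : ℝ) L, ∀ v ∈ Icc (0 : ℝ) L, dist (q u) (q v) ≤ |u - v|) ∧
      ∀ t ∈ Icc a b, p t = q (φ t) := by
  have has : a ∈ Icc a b := left_mem_Icc.mpr hab
  have hbs : b ∈ Icc a b := right_mem_Icc.mpr hab
  have hfin : eVariationOn p (Icc a b) ≠ ⊤ := by rw [hlen]; exact ENNReal.ofReal_ne_top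
  have hBV : BoundedVariationOn p (Icc a b) := hfin
  have hLBV : LocallyBoundedVariationOn p (Icc a b) := hBV.locallyBoundedVariationOn
  set φ := variationOnFromTo p (Icc a b) a with hφ
  have φmono : MonotoneOn φ (Icc a b) := variationOnFromTo.monotoneOn hLBV has
  have φa : φ a = 0 := variationOnFromTo.self _ _ _
  have φb : φ b = L := by
    rw [hφ, variationOnFromTo.eq_of_le p (Icc a b) hab, inter_self, hlen,
      ENNReal.toReal_ofReal hL]
  have hfin' : ∀ t t' : ℝ, eVariationOn p (Icc a b ∩ Icc t t') ≠ ⊤ :=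
    fun t t' => ne_top_of_le_ne_top hfin (eVariationOn.mono p inter_subset_left)
  have hsub : ∀ t ∈ Icc a b, ∀ t' ∈ Icc a b, t ≤ t' →
      φ t' - φ t = (eVariationOn p (Icc a b ∩ Icc t t')).toReal := by
    intro t ht t' ht' htt'
    have := variationOnFromTo.add hLBV has ht ht'
    rw [hφ]
    rw [← this, variationOnFromTo.eq_of_le p (Icc a b) htt']
    ring
  have hdist : ∀ t ∈ Icc a b, ∀ t' ∈ Icc a b, dist (p t) (p t') ≤ |φ t' - φ t| := by
    have key : ∀ t ∈ Icc a b, ∀ t' ∈ Icc a b, t ≤ t' → dist (p t) (p t') ≤ |φ t' - φ t| := by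
      intro t ht t' ht' htt'
      have h1 : dist (p t) (p t') ≤ (eVariationOn p (Icc a b ∩ Icc t t')).toReal :=
        BoundedVariationOn.dist_le (hBV.mono inter_subset_left)
          ⟨ht, le_rfl, htt'⟩ ⟨ht', htt', le_rfl⟩
      rw [← hsub t ht t' ht' htt'] at h1
      exact h1.trans (le_abs_self _)
    intro t ht t' ht'
    rcases le_total t t' with h | h
    · exact key t ht t' ht' h
    · rw [dist_comm, abs_sub_comm]; exact key t' ht' t ht h
  -- surjectivity
  have himage : φ '' Icc a b = Icc 0 L := by
    apply Subset.antisymm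
    · rintro - ⟨t, ht, rfl⟩
      exact ⟨φa ▸ φmono has ht ht.1, φb ▸ φmono ht hbs ht.2⟩
    · rintro c ⟨hc0, hcL⟩
      set S := {t | t ∈ Icc a b ∧ φ t ≤ c} with hS
      have hSa : a ∈ S := ⟨has, by rw [φa]; exact hc0⟩
      have hSbdd : BddAbove S := ⟨b, fun t ht => ht.1.2⟩
      set T := sSup S with hT
      have hTa : a ≤ T := le_csSup hSbdd hSa
      have hTb : T ≤ b := csSup_le ⟨a, hSa⟩ fun t ht => ht.1.2
      have hTs : T ∈ Icc a b := ⟨hTa, hTb⟩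
      refine ⟨T, hTs, ?_⟩
      by_contra hne
      rcases lt_or_gt_of_ne hne with hlt | hgt
      · -- φ T < c : push to the right
        have hTb' : T < b := hTb.lt_of_ne (by intro h; rw [h, φb] at hlt; linarith)
        obtain ⟨t, ⟨hTt, htb⟩, hvar⟩ :=
          evar_right_small hp hfin ⟨hTa, hTb'⟩ (ε := (c - φ T) / 2) (by linarith)
        have hts : t ∈ Icc a b := ⟨hTa.trans hTt.le, htb⟩
        have h1 : φ t - φ T ≤ (c - φ T) / 2 := by
          rw [hsub T hTs t hts hTt.le]
          exact ENNReal.toReal_le_of_le_ofReal (by linarith) hvar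
        have htS : t ∈ S := ⟨hts, by linarith⟩
        exact absurd (le_csSup hSbdd htS) (not_le.mpr hTt)
      · -- φ T > c : push to the left
        have hTa' : a < T := hTa.lt_of_ne (by intro h; rw [← h, φa] at hgt; linarith)
        obtain ⟨t, ⟨hat, htT⟩, hvar⟩ :=
          evar_left_small hp hfin ⟨hTa', hTb⟩ (ε := (φ T - c) / 2) (by linarith)
        have hts : t ∈ Icc a b := ⟨hat, htT.le.trans hTb⟩
        have h1 : φ T - φ t ≤ (φ T - c) / 2 := by
          rw [hsub t hts T hTs htT.le]
          exact ENNReal.toReal_le_of_le_ofReal (by linarith) hvar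
        have hub : ∀ r ∈ S, r ≤ t := by
          intro r hr
          by_contra hrt
          push_neg at hrt
          have := φmono hts hr.1 hrt.le
          have := hr.2
          linarith
        exact absurd (csSup_le ⟨a, hSa⟩ hub) (not_le.mpr htT)
  -- the reparameterized map
  set q : ℝ → M := fun u => p (Function.invFunOn φ (Icc a b) u) with hq
  have hinv : ∀ u ∈ Icc (0 : ℝ) L,
      Function.invFunOn φ (Icc a b) u ∈ Icc a b ∧ φ (Function.invFunOn φ (Icc a b) u) = u := by
    intro u hu
    rw [← himage] at hu
    obtain ⟨t, ht, rfl⟩ := hu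
    exact Function.invFunOn_pos ⟨t, ht, rfl⟩
  refine ⟨φ, q, φmono, himage, φa, φb, ?_, ?_⟩
  · intro u hu v hv
    obtain ⟨htu, hφu⟩ := hinv u hu
    obtain ⟨htv, hφv⟩ := hinv v hv
    have := hdist _ htv _ htu
    rw [hφu, hφv] at this
    rw [hq]
    rw [dist_comm] at this
    exact this.trans (by rw [abs_sub_comm])
  · intro t ht
    have hφt : φ t ∈ Icc 0 L := himage ▸ ⟨t, ht, rfl⟩
    obtain ⟨ht', hφ'⟩ := hinv (φ t) hφt
    have := hdist t ht _ ht'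
    rw [hφ'] at this
    simp only [sub_self, abs_zero] at this
    exact eq_of_dist_eq_zero (le_antisymm this dist_nonneg)
end

section
/- Let (M, d) be a metric space, let p : [a, b] → M be a continuous curve of finite length, and let f : M → ℂ be a function such that for every ε > 0 and every x ∈ M there is an open set containing x on which f is ε-Lipschitz of order 1. Then f ∘ p is constant on [a, b]. -/
open Set

/-- Uniform local Lipschitz bound along the curve. -/
lemma unif_eps_lip {M : Type*} [MetricSpace M] {a b : ℝ} (p : ℝ → M)
    (hp : ContinuousOn p (Icc a b)) (f : M → ℂ) {ε : ℝ}
    (hf : ∀ x : M, ∃ U : Set M, IsOpen U ∧ x ∈ U ∧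
      ∀ y ∈ U, ∀ z ∈ U, dist (f y) (f z) ≤ ε * dist y z) :
    ∃ δ > 0, ∀ x ∈ Icc a b, ∀ y ∈ Icc a b, dist x y < δ →
      dist (f (p x)) (f (p y)) ≤ ε * dist (p x) (p y) := by
  choose U hUo hUm hUl using hf
  have h : ∀ u : Icc a b, ∃ r > 0, ∀ v ∈ Icc a b, dist v (u : ℝ) < r → p v ∈ U (p u) := by
    rintro ⟨u, hu⟩
    have h1 : p ⁻¹' (U (p u)) ∈ nhdsWithin u (Icc a b) :=
      hp u hu ((hUo (p u)).mem_nhds (hUm (p u)))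
    rw [Metric.mem_nhdsWithin_iff] at h1
    obtain ⟨r, hr, hsub⟩ := h1
    exact ⟨r, hr, fun v hv hd => hsub ⟨Metric.mem_ball.2 hd, hv⟩⟩
  choose r hr hball using h
  obtain ⟨δ, hδ, hleb⟩ := lebesgue_number_lemma_of_metric (s := Icc a b)
    (c := fun u : Icc a b => Metric.ball (u : ℝ) (r u)) isCompact_Icc
    (fun _ => Metric.isOpen_ball)
    (fun x hx => mem_iUnion.2 ⟨⟨x, hx⟩, Metric.mem_ball_self (hr _)⟩)
  refine ⟨δ, hδ, fun x hx y hy hxy => ?_⟩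
  obtain ⟨u, hu⟩ := hleb x hx
  have hxu : p x ∈ U (p u) :=
    hball u x hx (Metric.mem_ball.1 (hu (Metric.mem_ball_self hδ)))
  have hyu : p y ∈ U (p u) :=
    hball u y hy (Metric.mem_ball.1 (hu (Metric.mem_ball.2 (by rwa [dist_comm] at hxy))))
  exact hUl (p u) (p x) hxu (p y) hyu

/-- Let `p : [a, b] → M` be a continuous curve of finite length, and let `f : M → ℂ`
be such that for every `ε > 0` and every `x ∈ M` there is an open set containing `x`
on which `f` is `ε`-Lipschitz of order `1`.  Then `f ∘ p` is constant on `[a, b]`. -/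
theorem comp_const_of_locally_eps_lipschitz {M : Type*} [MetricSpace M]
    (a b : ℝ) (hab : a ≤ b) (p : ℝ → M) (hp : ContinuousOn p (Icc a b))
    (hlen : eVariationOn p (Icc a b) ≠ ⊤) (f : M → ℂ)
    (hf : ∀ ε : ℝ, 0 < ε → ∀ x : M, ∃ U : Set M, IsOpen U ∧ x ∈ U ∧
      ∀ y ∈ U, ∀ z ∈ U, dist (f y) (f z) ≤ ε * dist y z) :
    ∀ s ∈ Icc a b, ∀ t ∈ Icc a b, f (p s) = f (p t) := by
  set V : ℝ := (eVariationOn p (Icc a b)).toReal with hV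
  have hV0 : 0 ≤ V := ENNReal.toReal_nonneg
  -- main estimate for s ≤ t
  have main : ∀ s ∈ Icc a b, ∀ t ∈ Icc a b, s ≤ t → ∀ ε : ℝ, 0 < ε →
      dist (f (p s)) (f (p t)) ≤ ε * V := by
    intro s hs t ht hst ε hε
    rcases eq_or_lt_of_le hst with rfl | hlt
    · simpa using mul_nonneg hε.le hV0
    obtain ⟨δ, hδ, hunif⟩ := unif_eps_lip p hp f (hf ε hε)
    obtain ⟨n, hn⟩ := exists_nat_gt ((t - s) / δ)
    have hts : 0 < t - s := sub_pos.2 hlt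
    have hn0 : 0 < (n : ℝ) := lt_trans (div_pos hts hδ) hn
    have hgap : (t - s) / n < δ := by
      rw [div_lt_iff₀ hn0]
      calc t - s = ((t - s) / δ) * δ := by field_simp
        _ < n * δ := by exact mul_lt_mul_of_pos_right hn hδ
        _ = δ * n := mul_comm _ _
    set u : ℕ → ℝ := fun i => s + (min i n : ℕ) * ((t - s) / n) with hu
    have hmono : Monotone u := by
      intro i j hij
      have : ((min i n : ℕ) : ℝ) ≤ ((min j n : ℕ) : ℝ) := by
        exact_mod_cast min_le_min hij le_rfl
      exact (add_le_add_iff_left s).2 (mul_le_mul_of_nonneg_right this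
        (div_nonneg hts.le hn0.le))
    have hmem : ∀ i, u i ∈ Icc a b := by
      intro i
      have h1 : s ≤ u i := le_add_of_nonneg_right
        (mul_nonneg (Nat.cast_nonneg _) (div_nonneg hts.le hn0.le))
      have h2 : u i ≤ t := by
        have : ((min i n : ℕ) : ℝ) ≤ (n : ℝ) := by exact_mod_cast min_le_right i n
        have h3 := mul_le_mul_of_nonneg_right this (div_nonneg hts.le hn0.le)
        have h4 : (n : ℝ) * ((t - s) / n) = t - s := by field_simp
        simp only [hu]
        linarith
      exact ⟨hs.1.trans h1, h2.trans ht.2⟩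
    have hu0 : u 0 = s := by simp [hu]
    have hun : u n = t := by
      simp only [hu, min_self]
      field_simp
      ring
    have hstep : ∀ i ∈ Finset.range n, u (i + 1) - u i = (t - s) / n := by
      intro i hi
      have hi' : i < n := Finset.mem_range.1 hi
      have h1 : min (i + 1) n = i + 1 := min_eq_left hi'
      have h2 : min i n = i := min_eq_left hi'.le
      simp only [hu, h1, h2]
      push_cast
      ring
    have key : ∀ i ∈ Finset.range n,
        dist (f (p (u i))) (f (p (u (i + 1)))) ≤ ε * dist (p (u i)) (p (u (i + 1))) := by
      intro i hi
      refine hunif (u i) (hmem i) (u (i + 1)) (hmem (i + 1)) ?_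
      rw [Real.dist_eq, abs_sub_comm, abs_of_nonneg (by rw [hstep i hi]; positivity)]
      rw [hstep i hi]; exact hgap
    calc dist (f (p s)) (f (p t)) = dist (f (p (u 0))) (f (p (u n))) := by rw [hu0, hun]
      _ ≤ ∑ i ∈ Finset.range n, dist (f (p (u i))) (f (p (u (i + 1)))) :=
          dist_le_range_sum_dist (fun i => f (p (u i))) n
      _ ≤ ∑ i ∈ Finset.range n, ε * dist (p (u i)) (p (u (i + 1))) :=
          Finset.sum_le_sum key
      _ = ε * ∑ i ∈ Finset.range n, dist (p (u i)) (p (u (i + 1))) := by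
          rw [Finset.mul_sum]
      _ ≤ ε * V := by
          refine mul_le_mul_of_nonneg_left ?_ hε.le
          have hsum := eVariationOn.sum_le (f := p) (n := n) hmono hmem
          have h1 : ∑ i ∈ Finset.range n, dist (p (u i)) (p (u (i + 1)))
              = (∑ i ∈ Finset.range n, edist (p (u (i + 1))) (p (u i))).toReal := by
            rw [ENNReal.toReal_sum (fun i _ => edist_ne_top _ _)]
            refine Finset.sum_congr rfl fun i _ => ?_
            rw [dist_edist, edist_comm]
          rw [h1, hV]
          exact ENNReal.toReal_mono hlen hsum
  have main2 : ∀ s ∈ Icc a b, ∀ t ∈ Icc a b, s ≤ t → f (p s) = f (p t) := by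
    intro s hs t ht hst
    have hd : dist (f (p s)) (f (p t)) ≤ 0 := by
      by_contra h
      push_neg at h
      have hε : 0 < dist (f (p s)) (f (p t)) / (V + 1) / 2 := by positivity
      have h1 := main s hs t ht hst _ hε
      set d := dist (f (p s)) (f (p t)) with hd
      have hVp : (0:ℝ) < V + 1 := by linarith
      have h4 : V / (V + 1) ≤ 1 := (div_le_one hVp).2 (by linarith)
      have h5 : d / (V + 1) / 2 * V = d / 2 * (V / (V + 1)) := by ring
      have h6 : d / 2 * (V / (V + 1)) ≤ d / 2 * 1 :=
        mul_le_mul_of_nonneg_left h4 (by linarith)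
      rw [h5] at h1
      linarith
    exact dist_le_zero.1 hd
  intro s hs t ht
  rcases le_total s t with h | h
  · exact main2 s hs t ht h
  · exact (main2 t ht s hs h).symm
end

section
/- Let E ⊆ ℝⁿ (n ≥ 1) be a porous set with constant c > 0. Then the Hausdorff dimension of E is strictly less than n. -/
open MeasureTheory
open Set Metric Finset
open scoped Classical ENNReal NNReal

namespace PorousAux

variable {n : ℕ}

/-- Half-open cube of side `δ` indexed by `v : Fin n → ℤ`. -/
def pcube (n : ℕ) (δ : ℝ) (v : Fin n → ℤ) : Set (EuclideanSpace ℝ (Fin n)) :=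
  {x | ∀ i, ⌊x i / δ⌋ = v i}

lemma mem_pcube_self (δ : ℝ) (x : EuclideanSpace ℝ (Fin n)) :
    x ∈ pcube n δ (fun i => ⌊x i / δ⌋) := fun _ => rfl

lemma pcube_coord_bounds {δ : ℝ} (hδ : 0 < δ) {v : Fin n → ℤ}
    {x : EuclideanSpace ℝ (Fin n)} (hx : x ∈ pcube n δ v) (i : Fin n) :
    (v i : ℝ) * δ ≤ x i ∧ x i < ((v i : ℝ) + 1) * δ := by
  have h := hx i
  have h1 : (v i : ℝ) ≤ x i / δ := h ▸ Int.floor_le _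
  have h2 : x i / δ < (v i : ℝ) + 1 := by
    have := Int.lt_floor_add_one (x i / δ); rw [h] at this; exact_mod_cast this
  constructor
  · calc (v i : ℝ) * δ ≤ (x i / δ) * δ := by nlinarith
    _ = x i := by field_simp
  · calc x i = (x i / δ) * δ := by field_simp
    _ < ((v i : ℝ) + 1) * δ := by nlinarith

lemma coord_dist_lt_of_mem_pcube {δ : ℝ} (hδ : 0 < δ) {v : Fin n → ℤ}
    {x y : EuclideanSpace ℝ (Fin n)} (hx : x ∈ pcube n δ v) (hy : y ∈ pcube n δ v)
    (i : Fin n) : |x i - y i| < δ := by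
  obtain ⟨h1, h2⟩ := pcube_coord_bounds hδ hx i
  obtain ⟨h3, h4⟩ := pcube_coord_bounds hδ hy i
  rw [abs_sub_lt_iff]; constructor <;> nlinarith

lemma coord_le_dist (x y : EuclideanSpace ℝ (Fin n)) (i : Fin n) :
    |x i - y i| ≤ dist x y := by
  rw [EuclideanSpace.dist_eq]
  have : |x i - y i| = Real.sqrt (dist (x i) (y i) ^ 2) := by
    rw [Real.sqrt_sq dist_nonneg, Real.dist_eq]
  rw [this]
  apply Real.sqrt_le_sqrt
  exact Finset.single_le_sum (f := fun j => dist (x j) (y j) ^ 2)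
    (fun j _ => sq_nonneg _) (Finset.mem_univ i)

lemma dist_lt_of_coords (hn : 1 ≤ n) {a : ℝ} {x y : EuclideanSpace ℝ (Fin n)}
    (h : ∀ i, |x i - y i| < a) : dist x y < Real.sqrt n * a := by
  have ha : 0 < a := lt_of_le_of_lt (abs_nonneg _) (h ⟨0, hn⟩)
  rw [EuclideanSpace.dist_eq]
  have hlt : ∑ i, dist (x i) (y i) ^ 2 < ∑ _i : Fin n, a ^ 2 := by
    apply Finset.sum_lt_sum_of_nonempty
    · exact Finset.univ_nonempty_iff.2 ⟨⟨0, hn⟩⟩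
    · intro i _
      have := h i
      rw [Real.dist_eq]
      nlinarith [abs_nonneg (x i - y i), abs_sub_abs_le_abs_sub (x i) (y i),
        sq_abs (x i - y i)]
  have hsum : ∑ _i : Fin n, a ^ 2 = (n : ℝ) * a ^ 2 := by simp [Finset.sum_const, mul_comm]
  rw [hsum] at hlt
  calc Real.sqrt (∑ i, dist (x i) (y i) ^ 2) < Real.sqrt ((n:ℝ) * a ^ 2) :=
        Real.sqrt_lt_sqrt (Finset.sum_nonneg fun i _ => sq_nonneg _) hlt
    _ = Real.sqrt n * a := by
        rw [Real.sqrt_mul (Nat.cast_nonneg n), Real.sqrt_sq ha.le]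

lemma ediam_pcube (hn : 1 ≤ n) {δ : ℝ} (hδ : 0 < δ) (v : Fin n → ℤ) :
    EMetric.diam (pcube n δ v) ≤ ENNReal.ofReal (Real.sqrt n * δ) := by
  apply EMetric.diam_le
  intro x hx y hy
  rw [edist_dist]
  exact ENNReal.ofReal_le_ofReal
    (dist_lt_of_coords hn (fun i => coord_dist_lt_of_mem_pcube hδ hx hy i)).le

/-- The `Mⁿ` subcubes of a cube. -/
noncomputable def pchildren (n M : ℕ) (v : Fin n → ℤ) : Finset (Fin n → ℤ) :=
  Fintype.piFinset (fun i => Finset.Ico ((M:ℤ) * v i) ((M:ℤ) * v i + M))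

lemma card_pchildren (M : ℕ) (v : Fin n → ℤ) : (pchildren n M v).card = M ^ n := by
  rw [pchildren, Fintype.card_piFinset]
  simp [Int.card_Ico]

lemma mem_pchildren_of_shared {M : ℕ} (hM : 0 < M) {δ : ℝ} (hδ : 0 < δ)
    {v w : Fin n → ℤ} {x : EuclideanSpace ℝ (Fin n)}
    (hxv : x ∈ pcube n δ v) (hxw : x ∈ pcube n (δ / M) w) :
    w ∈ pchildren n M v := by
  have hδ' : (0:ℝ) < δ / M := by positivity
  rw [pchildren, Fintype.mem_piFinset]
  intro i
  obtain ⟨h1, h2⟩ := pcube_coord_bounds hδ hxv i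
  obtain ⟨h3, h4⟩ := pcube_coord_bounds hδ' hxw i
  have hMR : (0:ℝ) < (M:ℝ) := by exact_mod_cast hM
  have hδeq : δ = (M:ℝ) * (δ / M) := by field_simp
  rw [Finset.mem_Ico]
  have key1 : ((M:ℤ) * v i : ℝ) < (w i : ℝ) + 1 := by
    push_cast
    have h1' := h1; rw [hδeq] at h1'
    nlinarith
  have key2 : ((w i : ℝ)) < (M:ℤ) * v i + M := by
    push_cast
    have h2' := h2; rw [hδeq] at h2'
    nlinarith
  have k1 : (M:ℤ) * v i < w i + 1 := by exact_mod_cast key1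
  have k2 : w i < (M:ℤ) * v i + M := by exact_mod_cast key2
  omega

/-- Porosity: every cube has a child cube disjoint from `E`. -/
lemma exclusion (hn : 1 ≤ n) {c : ℝ} (hc : 0 < c)
    {E : Set (EuclideanSpace ℝ (Fin n))}
    (hE : ∀ x : EuclideanSpace ℝ (Fin n), ∀ r : ℝ, 0 < r →
      ∃ z : EuclideanSpace ℝ (Fin n), dist x z < r ∧ Metric.ball z (c * r) ∩ E = ∅)
    {M : ℕ} (hM : 0 < M) (hM2 : 4 * Real.sqrt n ≤ c * M)
    {δ : ℝ} (hδ : 0 < δ) (v : Fin n → ℤ) :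
    ∃ w ∈ pchildren n M v, pcube n (δ / M) w ∩ E = ∅ := by
  set x₀ : EuclideanSpace ℝ (Fin n) := WithLp.toLp 2 (fun i => ((v i : ℝ) + 2⁻¹) * δ) with hx₀
  obtain ⟨z, hz1, hz2⟩ := hE x₀ (δ / 4) (by positivity)
  have hδ' : (0:ℝ) < δ / M := by positivity
  have hzx : ∀ i, |z i - x₀ i| < δ / 4 := fun i =>
    lt_of_le_of_lt (coord_le_dist z x₀ i) (by rwa [dist_comm])
  have hzv : z ∈ pcube n δ v := by
    intro i
    have hb := hzx i
    rw [hx₀] at hb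
    simp only [abs_sub_lt_iff, PiLp.toLp_apply] at hb
    rw [Int.floor_eq_iff]
    constructor
    · rw [le_div_iff₀ hδ]; nlinarith [hb.1, hb.2]
    · rw [div_lt_iff₀ hδ]; push_cast; nlinarith [hb.1, hb.2]
  refine ⟨fun i => ⌊z i / (δ / M)⌋, mem_pchildren_of_shared hM hδ hzv (mem_pcube_self _ z), ?_⟩
  rw [Set.eq_empty_iff_forall_notMem]
  rintro y ⟨hy1, hy2⟩
  have hyb : ∀ i, |y i - z i| < δ / M := fun i =>
    coord_dist_lt_of_mem_pcube hδ' hy1 (mem_pcube_self _ z) i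
  have hdist : dist y z < Real.sqrt n * (δ / M) := dist_lt_of_coords hn hyb
  have hfit : Real.sqrt n * (δ / M) ≤ c * (δ / 4) := by
    have hMR : (0:ℝ) < (M:ℝ) := by exact_mod_cast hM
    rw [mul_div_assoc', mul_div_assoc', div_le_div_iff₀ hMR (by norm_num : (0:ℝ) < 4)]
    nlinarith [Real.sqrt_nonneg (n:ℝ)]
  have hmem : y ∈ Metric.ball z (c * (δ / 4)) := by
    rw [Metric.mem_ball]; exact lt_of_lt_of_le hdist hfit
  exact Set.eq_empty_iff_forall_notMem.mp hz2 y ⟨hmem, hy2⟩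

/-- The family of cubes of generation `k` that might meet `E`. -/
noncomputable def pS (n M : ℕ) (E : Set (EuclideanSpace ℝ (Fin n))) (v₀ : Fin n → ℤ) :
    ℕ → Finset (Fin n → ℤ)
  | 0 => {v₀}
  | k + 1 => (pS n M E v₀ k).biUnion fun v =>
      (pchildren n M v).filter fun w =>
        (pcube n (((M:ℝ))⁻¹ ^ (k+1)) w ∩ E).Nonempty

lemma pdelta_succ (M : ℕ) (k : ℕ) :
    ((M:ℝ))⁻¹ ^ (k+1) = ((M:ℝ))⁻¹ ^ k / M := by
  rw [pow_succ, div_eq_mul_inv]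

lemma pS_cover {M : ℕ} (hM : 0 < M) (E : Set (EuclideanSpace ℝ (Fin n)))
    (v₀ : Fin n → ℤ) (k : ℕ) :
    E ∩ pcube n 1 v₀ ⊆ ⋃ v ∈ pS n M E v₀ k, pcube n (((M:ℝ))⁻¹ ^ k) v := by
  induction k with
  | zero =>
    intro x hx
    simp only [pS, Finset.mem_singleton, Set.mem_iUnion]
    exact ⟨v₀, rfl, by simpa using hx.2⟩
  | succ k ih =>
    intro x hx
    obtain ⟨v, hv, hxv⟩ := by simpa only [Set.mem_iUnion, exists_prop] using ih hx
    have hδk : (0:ℝ) < ((M:ℝ))⁻¹ ^ k := by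
      have : (0:ℝ) < (M:ℝ) := by exact_mod_cast hM
      positivity
    set w : Fin n → ℤ := fun i => ⌊x i / (((M:ℝ))⁻¹ ^ (k+1))⌋ with hw
    have hxw : x ∈ pcube n (((M:ℝ))⁻¹ ^ (k+1)) w := fun _ => rfl
    have hchild : w ∈ pchildren n M v := by
      apply mem_pchildren_of_shared hM hδk hxv
      rwa [← pdelta_succ]
    simp only [Set.mem_iUnion, exists_prop]
    refine ⟨w, ?_, hxw⟩
    simp only [pS, Finset.mem_biUnion]
    exact ⟨v, hv, Finset.mem_filter.mpr ⟨hchild, ⟨x, hxw, hx.1⟩⟩⟩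

lemma pS_card (hn : 1 ≤ n) {c : ℝ} (hc : 0 < c)
    {E : Set (EuclideanSpace ℝ (Fin n))}
    (hE : ∀ x : EuclideanSpace ℝ (Fin n), ∀ r : ℝ, 0 < r →
      ∃ z : EuclideanSpace ℝ (Fin n), dist x z < r ∧ Metric.ball z (c * r) ∩ E = ∅)
    {M : ℕ} (hM : 0 < M) (hM2 : 4 * Real.sqrt n ≤ c * M)
    (v₀ : Fin n → ℤ) (k : ℕ) :
    (pS n M E v₀ k).card ≤ (M ^ n - 1) ^ k := by
  induction k with
  | zero => simp [pS]
  | succ k ih =>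
    have hδk : (0:ℝ) < ((M:ℝ))⁻¹ ^ k := by
      have : (0:ℝ) < (M:ℝ) := by exact_mod_cast hM
      positivity
    calc (pS n M E v₀ (k+1)).card
        ≤ ∑ v ∈ pS n M E v₀ k, ((pchildren n M v).filter fun w =>
            (pcube n (((M:ℝ))⁻¹ ^ (k+1)) w ∩ E).Nonempty).card := by
          simp only [pS]
          apply Finset.card_biUnion_le.trans
          apply le_of_eq
          congr 1
      _ ≤ ∑ _v ∈ pS n M E v₀ k, (M ^ n - 1) := by
          apply Finset.sum_le_sum
          intro v _
          obtain ⟨w, hw1, hw2⟩ := exclusion hn hc hE hM hM2 hδk v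
          have hwno : w ∉ (pchildren n M v).filter fun w =>
              (pcube n (((M:ℝ))⁻¹ ^ (k+1)) w ∩ E).Nonempty := by
            rw [Finset.mem_filter]
            rintro ⟨-, y, hy⟩
            rw [pdelta_succ] at hy
            rw [Set.eq_empty_iff_forall_notMem] at hw2
            exact hw2 y hy
          calc ((pchildren n M v).filter _).card
              ≤ ((pchildren n M v).erase w).card :=
                Finset.card_le_card (fun a ha => Finset.mem_erase.mpr
                  ⟨fun h => hwno (h ▸ ha), Finset.filter_subset _ _ ha⟩)
            _ = M ^ n - 1 := by rw [Finset.card_erase_of_mem hw1, card_pchildren]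
      _ = (pS n M E v₀ k).card * (M ^ n - 1) := by rw [Finset.sum_const, smul_eq_mul]
      _ ≤ (M ^ n - 1) ^ k * (M ^ n - 1) := Nat.mul_le_mul_right _ ih
      _ = (M ^ n - 1) ^ (k+1) := by rw [pow_succ]

lemma measure_zero_aux (hn : 1 ≤ n)
    {E : Set (EuclideanSpace ℝ (Fin n))}
    {M : ℕ} (hM : 2 ≤ M)
    (hcard : ∀ (v₀ : Fin n → ℤ) (k : ℕ), (pS n M E v₀ k).card ≤ (M ^ n - 1) ^ k)
    (v₀ : Fin n → ℤ) {s : ℝ} (hs0 : 0 ≤ s)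
    (hsN : ((M ^ n - 1 : ℕ) : ℝ) < (M : ℝ) ^ s) :
    μH[s] (E ∩ pcube n 1 v₀) = 0 := by
  have hM0 : 0 < M := by omega
  have hMR : (1:ℝ) < (M:ℝ) := by exact_mod_cast hM
  have hMR0 : (0:ℝ) < (M:ℝ) := by linarith
  set δ : ℕ → ℝ := fun k => ((M:ℝ))⁻¹ ^ k with hδdef
  have hδpos : ∀ k, 0 < δ k := fun k => by positivity
  set N : ℕ := M ^ n - 1 with hN
  have key : μH[s] (E ∩ pcube n 1 v₀) ≤
      Filter.liminf (fun k => ∑ v : ↥(pS n M E v₀ k),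
        EMetric.diam (pcube n (δ k) v.1) ^ s) Filter.atTop := by
    apply MeasureTheory.Measure.hausdorffMeasure_le_liminf_sum s _
      (fun k => ENNReal.ofReal (Real.sqrt n * δ k))
    · have h1 : Filter.Tendsto δ Filter.atTop (nhds 0) := by
        apply tendsto_pow_atTop_nhds_zero_of_lt_one (by positivity)
        rw [inv_lt_one_iff₀]; right; exact hMR
      have h2 : Filter.Tendsto (fun k => Real.sqrt n * δ k) Filter.atTop
          (nhds (Real.sqrt n * 0)) := h1.const_mul _
      rw [mul_zero] at h2
      have h3 := ENNReal.tendsto_ofReal h2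
      simpa using h3
    · filter_upwards with k
      intro i
      exact ediam_pcube hn (hδpos k) _
    · filter_upwards with k
      have hcov := pS_cover hM0 E v₀ k
      intro x hx
      obtain ⟨v, hv, hxv⟩ := by simpa only [Set.mem_iUnion, exists_prop] using hcov hx
      exact Set.mem_iUnion.mpr ⟨⟨v, hv⟩, hxv⟩
  have sumbound : ∀ k, (∑ v : ↥(pS n M E v₀ k),
      EMetric.diam (pcube n (δ k) v.1) ^ s) ≤
      ENNReal.ofReal ((N : ℝ) ^ k * (Real.sqrt n * δ k) ^ s) := by
    intro k
    have hd : ∀ v : ↥(pS n M E v₀ k),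
        EMetric.diam (pcube n (δ k) v.1) ^ s ≤
          ENNReal.ofReal ((Real.sqrt n * δ k) ^ s) := by
      intro v
      have h1 := ediam_pcube hn (hδpos k) v.1
      have h2 : (0:ℝ) < Real.sqrt n * δ k := by
        have : (0:ℝ) < Real.sqrt n := Real.sqrt_pos.mpr (by exact_mod_cast hn)
        positivity
      calc EMetric.diam (pcube n (δ k) v.1) ^ s
          ≤ ENNReal.ofReal (Real.sqrt n * δ k) ^ s :=
            ENNReal.rpow_le_rpow h1 hs0
        _ = ENNReal.ofReal ((Real.sqrt n * δ k) ^ s) :=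
            ENNReal.ofReal_rpow_of_pos h2
    calc (∑ v : ↥(pS n M E v₀ k),
        EMetric.diam (pcube n (δ k) v.1) ^ s)
        ≤ ∑ _v : ↥(pS n M E v₀ k),
            ENNReal.ofReal ((Real.sqrt n * δ k) ^ s) := Finset.sum_le_sum fun v _ => hd v
      _ = ((pS n M E v₀ k).card : ℝ≥0∞) * ENNReal.ofReal ((Real.sqrt n * δ k) ^ s) := by
          rw [Finset.sum_const, Finset.card_univ, Fintype.card_coe, nsmul_eq_mul]
      _ ≤ ((N ^ k : ℕ) : ℝ≥0∞) * ENNReal.ofReal ((Real.sqrt n * δ k) ^ s) := by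
          gcongr
          exact_mod_cast hcard v₀ k
      _ = ENNReal.ofReal ((N : ℝ) ^ k * (Real.sqrt n * δ k) ^ s) := by
          rw [ENNReal.ofReal_mul (by positivity)]
          congr 1
          rw [← ENNReal.ofReal_natCast]
          push_cast
          ring_nf
  have hreal : Filter.Tendsto (fun k => (N : ℝ) ^ k * (Real.sqrt n * δ k) ^ s)
      Filter.atTop (nhds 0) := by
    have heq : ∀ k, (N : ℝ) ^ k * (Real.sqrt n * δ k) ^ s =
        (Real.sqrt n) ^ s * ((N : ℝ) * ((M:ℝ))⁻¹ ^ s) ^ k := by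
      intro k
      have hsn : (0:ℝ) ≤ Real.sqrt n := Real.sqrt_nonneg _
      have hδk : (0:ℝ) ≤ δ k := (hδpos k).le
      rw [Real.mul_rpow hsn hδk]
      have hpow : (δ k) ^ s = (((M:ℝ))⁻¹ ^ s) ^ k := by
        show (((M:ℝ))⁻¹ ^ k : ℝ) ^ s = _
        rw [← Real.rpow_natCast ((M:ℝ))⁻¹ k, ← Real.rpow_mul (by positivity),
          mul_comm, Real.rpow_mul (by positivity), Real.rpow_natCast]
      rw [hpow, mul_pow]
      ring
    simp only [heq]
    have hρ : |(N : ℝ) * ((M:ℝ))⁻¹ ^ s| < 1 := by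
      rw [abs_of_nonneg (by positivity)]
      rw [Real.inv_rpow hMR0.le, ← div_eq_mul_inv, div_lt_one (Real.rpow_pos_of_pos hMR0 s)]
      exact hsN
    have hgeo := tendsto_pow_atTop_nhds_zero_of_abs_lt_one hρ
    simpa using hgeo.const_mul ((Real.sqrt n) ^ s)
  have hlim : Filter.Tendsto (fun k => ENNReal.ofReal ((N : ℝ) ^ k * (Real.sqrt n * δ k) ^ s))
      Filter.atTop (nhds 0) := by
    have := ENNReal.tendsto_ofReal hreal
    simpa using this
  have hlim0 : Filter.liminf (fun k => ∑ v : ↥(pS n M E v₀ k),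
      EMetric.diam (pcube n (δ k) v.1) ^ s) Filter.atTop = 0 := by
    apply le_antisymm _ zero_le
    calc Filter.liminf _ Filter.atTop
        ≤ Filter.liminf (fun k => ENNReal.ofReal ((N : ℝ) ^ k * (Real.sqrt n * δ k) ^ s))
            Filter.atTop := Filter.liminf_le_liminf (Filter.Eventually.of_forall sumbound)
      _ = 0 := hlim.liminf_eq
  rw [hlim0] at key
  exact le_antisymm key zero_le

end PorousAux

open PorousAux

/-- A porous subset of `ℝⁿ` (with `n ≥ 1`) has Hausdorff dimension strictly
less than `n`.  Here `E` is porous with constant `c > 0`: for every `x ∈ ℝⁿ`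
and `r > 0` there is a `z` with `‖x − z‖ < r` and `B(z, c r) ∩ E = ∅`. -/
theorem porous_dimH_lt (n : ℕ) (hn : 1 ≤ n) (c : ℝ) (hc : 0 < c)
    (E : Set (EuclideanSpace ℝ (Fin n)))
    (hE : ∀ x : EuclideanSpace ℝ (Fin n), ∀ r : ℝ, 0 < r →
      ∃ z : EuclideanSpace ℝ (Fin n), dist x z < r ∧ Metric.ball z (c * r) ∩ E = ∅) :
    dimH E < n := by
  -- choose the subdivision parameter M
  set M : ℕ := max 2 ⌈4 * Real.sqrt n / c⌉₊ with hMdef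
  have hM2 : 2 ≤ M := le_max_left _ _
  have hM0 : 0 < M := by omega
  have hMc : 4 * Real.sqrt n ≤ c * M := by
    have h1 : 4 * Real.sqrt n / c ≤ (⌈4 * Real.sqrt n / c⌉₊ : ℝ) := Nat.le_ceil _
    have h2 : ((⌈4 * Real.sqrt n / c⌉₊ : ℕ) : ℝ) ≤ (M : ℝ) := by
      exact_mod_cast le_max_right 2 ⌈4 * Real.sqrt n / c⌉₊
    have := h1.trans h2
    calc 4 * Real.sqrt n = c * (4 * Real.sqrt n / c) := by field_simp
      _ ≤ c * M := by nlinarith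
  have hMR : (1:ℝ) < (M:ℝ) := by exact_mod_cast hM2.trans_lt' one_lt_two
  have hMR0 : (0:ℝ) < (M:ℝ) := by linarith
  set N : ℕ := M ^ n - 1 with hNdef
  have hMn : 2 ≤ M ^ n := le_trans hM2 (Nat.le_self_pow (by omega) M)
  have hN1 : 1 ≤ N := by omega
  have hNltR : (N : ℝ) < (M : ℝ) ^ (n : ℝ) := by
    rw [Real.rpow_natCast]
    have : (N : ℝ) < ((M ^ n : ℕ) : ℝ) := by exact_mod_cast (by omega : N < M ^ n)
    simpa [Nat.cast_pow] using this
  have hNpos : (0:ℝ) < (N : ℝ) := by exact_mod_cast hN1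
  -- choose the exponent s
  set s : ℝ := (Real.logb M N + n) / 2 with hsdef
  have hlogN : Real.logb M N < n := by
    rw [Real.logb_lt_iff_lt_rpow hMR hNpos]
    exact hNltR
  have hlog0 : 0 ≤ Real.logb M N := Real.logb_nonneg hMR (by exact_mod_cast hN1)
  have hs0 : 0 ≤ s := by rw [hsdef]; positivity
  have hsn : s < n := by rw [hsdef]; linarith
  have hsN : ((M ^ n - 1 : ℕ) : ℝ) < (M : ℝ) ^ s := by
    have hgt : Real.logb M N < s := by rw [hsdef]; linarith
    have := (Real.rpow_lt_rpow_left_iff hMR).mpr hgt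
    rwa [Real.rpow_logb hMR0 hMR.ne' hNpos] at this
  -- Hausdorff measure of each piece vanishes
  have hcard : ∀ (v₀ : Fin n → ℤ) (k : ℕ), (pS n M E v₀ k).card ≤ (M ^ n - 1) ^ k :=
    fun v₀ k => pS_card hn hc hE hM0 hMc v₀ k
  have hzero : ∀ v₀ : Fin n → ℤ, μH[s] (E ∩ pcube n 1 v₀) = 0 :=
    fun v₀ => measure_zero_aux hn hM2 hcard v₀ hs0 hsN
  -- each piece has dimension at most s
  have hdim : ∀ v₀ : Fin n → ℤ, dimH (E ∩ pcube n 1 v₀) ≤ ENNReal.ofReal s := by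
    intro v₀
    have hcoe : ((s.toNNReal : ℝ≥0) : ℝ) = s := Real.coe_toNNReal _ hs0
    have : μH[(s.toNNReal : ℝ)] (E ∩ pcube n 1 v₀) ≠ ⊤ := by
      rw [hcoe, hzero v₀]; exact ENNReal.zero_ne_top
    have h := dimH_le_of_hausdorffMeasure_ne_top this
    exact h
  -- assemble
  have hsub : E ⊆ ⋃ v₀ : Fin n → ℤ, E ∩ pcube n 1 v₀ := by
    intro x hx
    exact Set.mem_iUnion.mpr ⟨fun i => ⌊x i / (1:ℝ)⌋, hx, mem_pcube_self 1 x⟩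
  calc dimH E ≤ dimH (⋃ v₀ : Fin n → ℤ, E ∩ pcube n 1 v₀) := dimH_mono hsub
    _ = ⨆ v₀ : Fin n → ℤ, dimH (E ∩ pcube n 1 v₀) := dimH_iUnion _
    _ ≤ ENNReal.ofReal s := iSup_le hdim
    _ < ENNReal.ofReal n := by
        apply ENNReal.ofReal_lt_ofReal_iff_of_nonneg hs0 |>.mpr hsn
    _ = (n : ℝ≥0∞) := ENNReal.ofReal_natCast n
end

section
/- Let n, p ≥ 1, let k ≥ 1, and let A : ℝⁿ → ℝᵖ be a linear map. Then the following are equivalent: (i) for every hyperplane H ⊆ ℝⁿ (i.e., every linear subspace of dimension n − 1), the operator norm of A is at most k times the operator norm of the restriction of A to H; (ii) for every linear map B : ℝⁿ → ℝᵖ of rank at most one, the operator norm of A is at most k times the operator norm of A + B. -/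
open Module

lemma exists_submodule_le_finrank_eq {K V : Type*} [Field K] [AddCommGroup V] [Module K V]
    [FiniteDimensional K V] (W : Submodule K V) (m : ℕ) (h : m ≤ finrank K W) :
    ∃ H : Submodule K V, H ≤ W ∧ finrank K H = m := by
  classical
  set b := finBasis K W
  have hle : m ≤ finrank K W := h
  let f : Fin m → W := fun i => b (Fin.castLE hle i)
  have hli : LinearIndependent K f :=
    b.linearIndependent.comp _ (Fin.castLE_injective hle)
  let H0 : Submodule K W := Submodule.span K (Set.range f)
  have hH0 : finrank K H0 = m := by
    rw [finrank_span_eq_card hli, Fintype.card_fin]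
  refine ⟨H0.map W.subtype, Submodule.map_subtype_le W H0, ?_⟩
  rw [← hH0]
  exact (Submodule.equivMapOfInjective W.subtype W.injective_subtype H0).symm.finrank_eq

/-- For a linear map `A : ℝⁿ → ℝᵖ` and `k ≥ 1`, the following are equivalent:
(i) for every hyperplane `H ⊆ ℝⁿ` (linear subspace of dimension `n − 1`), the
operator norm of `A` is at most `k` times the operator norm of the restriction
of `A` to `H`; (ii) for every linear map `B : ℝⁿ → ℝᵖ` of rank at most one,
the operator norm of `A` is at most `k` times the operator norm of `A + B`. -/
theorem restricted_iff_rank_one_perturbation (n p : ℕ) (hn : 1 ≤ n) (hp : 1 ≤ p)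
    (k : ℝ) (hk : 1 ≤ k)
    (A : EuclideanSpace ℝ (Fin n) →L[ℝ] EuclideanSpace ℝ (Fin p)) :
    (∀ H : Submodule ℝ (EuclideanSpace ℝ (Fin n)), Module.finrank ℝ H = n - 1 →
        ‖A‖ ≤ k * ‖A.comp H.subtypeL‖) ↔
      (∀ B : EuclideanSpace ℝ (Fin n) →L[ℝ] EuclideanSpace ℝ (Fin p),
        Module.finrank ℝ (LinearMap.range (B : EuclideanSpace ℝ (Fin n) →ₗ[ℝ]
          EuclideanSpace ℝ (Fin p))) ≤ 1 → ‖A‖ ≤ k * ‖A + B‖) := by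
  have hk0 : (0 : ℝ) ≤ k := le_trans zero_le_one hk
  have hE : finrank ℝ (EuclideanSpace ℝ (Fin n)) = n := by simp
  constructor
  · intro hyp B hB
    -- rank-nullity: the kernel of B has dimension ≥ n - 1
    have hrn : finrank ℝ (LinearMap.range (B : EuclideanSpace ℝ (Fin n) →ₗ[ℝ]
        EuclideanSpace ℝ (Fin p))) + finrank ℝ (LinearMap.ker (B : EuclideanSpace ℝ (Fin n) →ₗ[ℝ]
        EuclideanSpace ℝ (Fin p))) = n := by
      rw [LinearMap.finrank_range_add_finrank_ker, hE]
    have hker : n - 1 ≤ finrank ℝ (LinearMap.ker (B : EuclideanSpace ℝ (Fin n) →ₗ[ℝ]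
        EuclideanSpace ℝ (Fin p))) := by omega
    obtain ⟨H, hHle, hHrank⟩ := exists_submodule_le_finrank_eq _ (n - 1) hker
    have heq : A.comp H.subtypeL = (A + B).comp H.subtypeL := by
      ext x
      have hx : B (x : EuclideanSpace ℝ (Fin n)) = 0 := hHle x.2
      simp [hx]
    have hle2 : ‖(A + B).comp H.subtypeL‖ ≤ ‖A + B‖ := by
      refine ContinuousLinearMap.opNorm_le_bound _ (norm_nonneg _) fun x => ?_
      exact (A + B).le_opNorm x
    calc ‖A‖ ≤ k * ‖A.comp H.subtypeL‖ := hyp H hHrank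
      _ = k * ‖(A + B).comp H.subtypeL‖ := by rw [heq]
      _ ≤ k * ‖A + B‖ := by exact mul_le_mul_of_nonneg_left hle2 hk0
  · intro hyp H hH
    -- orthogonal projection onto H
    let P : EuclideanSpace ℝ (Fin n) →L[ℝ] EuclideanSpace ℝ (Fin n) :=
      H.subtypeL.comp (H.orthogonalProjectionOnto)
    let B := A.comp P - A
    have hAB : A + B = A.comp P := by
      simp [B]
    -- B has rank at most 1
    have hHperp : finrank ℝ Hᗮ = 1 := by
      have := H.finrank_add_finrank_orthogonal
      rw [hE, hH] at this
      omega
    have hrange : LinearMap.range (B : EuclideanSpace ℝ (Fin n) →ₗ[ℝ]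
        EuclideanSpace ℝ (Fin p)) ≤ Hᗮ.map (A : EuclideanSpace ℝ (Fin n) →ₗ[ℝ]
        EuclideanSpace ℝ (Fin p)) := by
      rintro - ⟨x, rfl⟩
      refine ⟨P x - x, ?_, ?_⟩
      · have : x - P x ∈ Hᗮ := Submodule.sub_starProjection_mem_orthogonal (K := H) x
        simpa using neg_mem this
      · simp [B, map_sub]
    have hBrank : finrank ℝ (LinearMap.range (B : EuclideanSpace ℝ (Fin n) →ₗ[ℝ]
        EuclideanSpace ℝ (Fin p))) ≤ 1 := by
      calc finrank ℝ (LinearMap.range (B : EuclideanSpace ℝ (Fin n) →ₗ[ℝ]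
            EuclideanSpace ℝ (Fin p)))
          ≤ finrank ℝ (Hᗮ.map (A : EuclideanSpace ℝ (Fin n) →ₗ[ℝ]
            EuclideanSpace ℝ (Fin p))) := Submodule.finrank_mono hrange
        _ ≤ finrank ℝ Hᗮ := Submodule.finrank_map_le _ _
        _ = 1 := hHperp
    have hnorm : ‖A + B‖ ≤ ‖A.comp H.subtypeL‖ := by
      rw [hAB]
      have : A.comp P = (A.comp H.subtypeL).comp (H.orthogonalProjectionOnto : EuclideanSpace ℝ (Fin n) →L[ℝ] H) := rfl
      rw [this]
      calc ‖(A.comp H.subtypeL).comp (H.orthogonalProjectionOnto : EuclideanSpace ℝ (Fin n) →L[ℝ] H)‖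
          ≤ ‖A.comp H.subtypeL‖ * ‖(H.orthogonalProjectionOnto : EuclideanSpace ℝ (Fin n) →L[ℝ] H)‖ :=
            ContinuousLinearMap.opNorm_comp_le _ _
        _ ≤ ‖A.comp H.subtypeL‖ * 1 := by
            gcongr
            exact Submodule.orthogonalProjectionOnto_norm_le H
        _ = ‖A.comp H.subtypeL‖ := mul_one _
    calc ‖A‖ ≤ k * ‖A + B‖ := hyp B hBrank
      _ ≤ k * ‖A.comp H.subtypeL‖ := mul_le_mul_of_nonneg_left hnorm hk0
end

section
/- Let n ≥ 1, let U ⊆ ℝⁿ be a nonempty connected open set, let k ≥ 1, and let f : U → ℝ be continuously differentiable. Suppose f is k-restricted, i.e., for every x ∈ U and every hyperplane H ⊆ ℝⁿ, the operator norm of the differential df_x is at most k times the operator norm of the restriction of df_x to H. Then f is constant on U. -/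
set_option synthInstance.maxHeartbeats 1000000
set_option maxHeartbeats 1000000

/-- Let `U ⊆ ℝⁿ` (with `n ≥ 1`) be a nonempty connected open set, `k ≥ 1`, and
let `f : U → ℝ` be continuously differentiable and `k`-restricted: for every
`x ∈ U` and every hyperplane `H ⊆ ℝⁿ` the norm of `df_x` is at most `k` times
the norm of the restriction of `df_x` to `H`.  Then `f` is constant on `U`. -/
theorem restricted_real_valued_constant (n : ℕ) (hn : 1 ≤ n)
    (U : Set (EuclideanSpace ℝ (Fin n))) (hU : IsOpen U) (hUc : IsConnected U)
    (k : ℝ) (hk : 1 ≤ k) (f : EuclideanSpace ℝ (Fin n) → ℝ)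
    (hf : ContDiffOn ℝ 1 f U)
    (hres : ∀ x ∈ U, ∀ H : Submodule ℝ (EuclideanSpace ℝ (Fin n)),
      Module.finrank ℝ H = n - 1 →
      ‖fderiv ℝ f x‖ ≤ k * ‖(fderiv ℝ f x).comp H.subtypeL‖) :
    ∀ x ∈ U, ∀ y ∈ U, f x = f y := by
  have hdiff : ∀ x ∈ U, DifferentiableAt ℝ f x := fun x hx =>
    (hf.differentiableOn one_ne_zero).differentiableAt (hU.mem_nhds hx)
  -- fderiv is zero on U
  have hzero : ∀ x ∈ U, fderiv ℝ f x = 0 := by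
    intro x hx
    by_contra hne
    set L := fderiv ℝ f x with hL
    have hLlin : (L : EuclideanSpace ℝ (Fin n) →ₗ[ℝ] ℝ) ≠ 0 := by
      intro h
      apply hne
      ext v
      have := LinearMap.congr_fun h v
      simpa using this
    have hdim : Module.finrank ℝ (LinearMap.ker (L : EuclideanSpace ℝ (Fin n) →ₗ[ℝ] ℝ)) = n - 1 := by
      have hrank : Module.finrank ℝ (LinearMap.range (L : EuclideanSpace ℝ (Fin n) →ₗ[ℝ] ℝ)) = 1 := by
        have : LinearMap.range (L : EuclideanSpace ℝ (Fin n) →ₗ[ℝ] ℝ) = ⊤ := by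
          obtain ⟨v, hv⟩ : ∃ v, L v ≠ 0 := by
            by_contra h
            push_neg at h
            exact hLlin (LinearMap.ext fun v => by simpa using h v)
          apply Submodule.eq_top_of_finrank_eq
          have h1 : Module.finrank ℝ (LinearMap.range (L : EuclideanSpace ℝ (Fin n) →ₗ[ℝ] ℝ)) ≤ 1 := by
            simpa using Submodule.finrank_le (LinearMap.range (L : EuclideanSpace ℝ (Fin n) →ₗ[ℝ] ℝ))
          have h2 : 0 < Module.finrank ℝ (LinearMap.range (L : EuclideanSpace ℝ (Fin n) →ₗ[ℝ] ℝ)) := by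
            rw [Module.finrank_pos_iff]
            exact ⟨⟨L v, LinearMap.mem_range_self _ v⟩, 0, by simpa using hv⟩
          rw [Module.finrank_self]
          omega
        rw [this]
        simp
      have := LinearMap.finrank_range_add_finrank_ker (L : EuclideanSpace ℝ (Fin n) →ₗ[ℝ] ℝ)
      rw [hrank] at this
      have hdimE : Module.finrank ℝ (EuclideanSpace ℝ (Fin n)) = n := by simp
      rw [hdimE] at this
      omega
    have hcomp : L.comp (LinearMap.ker (L : EuclideanSpace ℝ (Fin n) →ₗ[ℝ] ℝ)).subtypeL = 0 := by
      ext ⟨v, hv⟩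
      simpa using hv
    have hle := hres x hx _ hdim
    rw [hcomp] at hle
    have h0 : ‖(0 : LinearMap.ker (L : EuclideanSpace ℝ (Fin n) →ₗ[ℝ] ℝ) →L[ℝ] ℝ)‖ = 0 :=
      ContinuousLinearMap.opNorm_zero
    rw [h0, mul_zero] at hle
    exact hne (norm_le_zero_iff.mp hle)
  -- local constancy
  have hloc : ∀ x ∈ U, ∀ᶠ y in nhds x, f y = f x := by
    intro x hx
    rcases Metric.isOpen_iff.mp hU x hx with ⟨ε, hε, hball⟩
    have hconst : ∀ y ∈ Metric.ball x ε, f y = f x := by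
      intro y hy
      apply Convex.is_const_of_fderivWithin_eq_zero (convex_ball x ε)
        ((hf.differentiableOn one_ne_zero).mono hball)
      · intro z hz
        rw [fderivWithin_of_isOpen Metric.isOpen_ball hz]
        exact hzero z (hball hz)
      · exact hy
      · exact Metric.mem_ball_self hε
    filter_upwards [Metric.ball_mem_nhds x hε] with y hy using hconst y hy
  -- constancy on connected set
  intro x hx y hy
  set S := {z ∈ U | f z = f x} with hS
  set T := {z ∈ U | f z ≠ f x} with hT
  have hSopen : IsOpen S := by
    rw [isOpen_iff_mem_nhds]
    rintro z ⟨hzU, hzf⟩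
    filter_upwards [hloc z hzU, hU.mem_nhds hzU] with w hw hwU
    exact ⟨hwU, hw.trans hzf⟩
  have hTopen : IsOpen T := by
    rw [isOpen_iff_mem_nhds]
    rintro z ⟨hzU, hzf⟩
    filter_upwards [hloc z hzU, hU.mem_nhds hzU] with w hw hwU
    exact ⟨hwU, hw.symm ▸ hzf⟩
  have hsub : U ⊆ S ∪ T := fun z hz => by
    by_cases h : f z = f x
    · exact Or.inl ⟨hz, h⟩
    · exact Or.inr ⟨hz, h⟩
  have hdisj : Disjoint S T := by
    rw [Set.disjoint_left]
    rintro z ⟨-, h1⟩ ⟨-, h2⟩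
    exact h2 h1
  have hUS : U ⊆ S :=
    hUc.isPreconnected.subset_left_of_subset_union hSopen hTopen hdisj hsub ⟨x, hx, hx, rfl⟩
  exact ((hUS hy).2.trans (hUS hx).2.symm).symm
end
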